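/- Let r, d ≥ 1 and L ≥ 0. Let π and π̂ be Borel probability measures on ℝ^r with finite first moments, and let ν and ν̂ be Borel probability measures on ℝ^d with finite first moments. Let G be a nonempty set of L-Lipschitz functions from ℝ^r to ℝ^d, and let F be a nonempty set of 1-Lipschitz functions from ℝ^d to ℝ that is closed under negation (f ∈ F implies −f ∈ F). Suppose ĝ ∈ G satisfies sup_{f ∈ F} [ ∫ f(ĝ(z)) dπ̂(z) − ∫ f dν̂ ] ≤ sup_{f ∈ F} [ ∫ f(g(z)) dπ̂(z) − ∫ f dν̂ ] for every g ∈ G. Then W₁(ĝ#π, ν) ≤ inf_{g ∈ G} W₁(g#π, ν) + 2 · sup_{g ∈ G} W₁(g#π, g#π̂) + 2 · W₁(ν, ν̂) + sup over all 1-Lipschitz f : ℝ^d → ℝ of inf_{f̃ ∈ F} [ ∫ (f(ĝ(z)) − f̃(ĝ(z))) dπ(z) + ∫ (f̃(x) − f(x)) dν(x) ]. -/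
import Mathlib


open MeasureTheory
open scoped ENNReal NNReal BigOperators

noncomputable section

abbrev Euc (k : ℕ) := EuclideanSpace ℝ (Fin k)

/-- Wasserstein-1 distance in Kantorovich–Rubinstein dual form. -/
noncomputable def W1 {k : ℕ} (μ ν : Measure (Euc k)) : ℝ :=
  sSup {t : ℝ | ∃ f : Euc k → ℝ, LipschitzWith 1 f ∧ t = (∫ x, f x ∂μ) - ∫ x, f x ∂ν}

namespace W1aux

variable {k : ℕ}

lemma zero_lip : LipschitzWith 1 (fun _ : Euc k => (0:ℝ)) :=
  LipschitzWith.of_dist_le_mul fun x y => by simp [dist_self]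

lemma W1_set_nonempty (μ ν : Measure (Euc k)) :
    {t : ℝ | ∃ f : Euc k → ℝ, LipschitzWith 1 f ∧ t = (∫ x, f x ∂μ) - ∫ x, f x ∂ν}.Nonempty :=
  ⟨0, fun _ => 0, zero_lip, by simp⟩

lemma integrable_of_lip {μ : Measure (Euc k)} [IsProbabilityMeasure μ] (x0 : Euc k)
    (hμ : Integrable (fun x => ‖x - x0‖) μ) {f : Euc k → ℝ} (hf : LipschitzWith 1 f) :
    Integrable f μ := by
  refine Integrable.mono' ((integrable_const |f x0|).add hμ)
    hf.continuous.aestronglyMeasurable ?_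
  filter_upwards with x
  have h1 : dist (f x) (f x0) ≤ 1 * dist x x0 := hf.dist_le_mul x x0
  rw [Real.dist_eq] at h1
  have h2 : dist x x0 = ‖x - x0‖ := dist_eq_norm x x0
  calc ‖f x‖ = |f x| := rfl
    _ ≤ |f x0| + |f x - f x0| := by
        have := abs_sub_abs_le_abs_sub (f x) (f x0); linarith [abs_nonneg (f x - f x0)]
    _ ≤ |f x0| + ‖x - x0‖ := by rw [← h2]; linarith

lemma W1_elt_le {μ ν : Measure (Euc k)} [IsProbabilityMeasure μ] [IsProbabilityMeasure ν]
    (x0 : Euc k)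
    (hμ : Integrable (fun x => ‖x - x0‖) μ) (hν : Integrable (fun x => ‖x - x0‖) ν) :
    ∀ t ∈ {t : ℝ | ∃ f : Euc k → ℝ, LipschitzWith 1 f ∧ t = (∫ x, f x ∂μ) - ∫ x, f x ∂ν},
      t ≤ (∫ x, ‖x - x0‖ ∂μ) + ∫ x, ‖x - x0‖ ∂ν := by
  rintro t ⟨f, hf, rfl⟩
  have hfμ : Integrable f μ := integrable_of_lip x0 hμ hf
  have hfν : Integrable f ν := integrable_of_lip x0 hν hf
  have hb : ∀ x : Euc k, |f x - f x0| ≤ ‖x - x0‖ := fun x => by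
    have h1 : dist (f x) (f x0) ≤ 1 * dist x x0 := hf.dist_le_mul x x0
    rw [Real.dist_eq, dist_eq_norm] at h1; linarith
  have e1 : (∫ x, f x ∂μ) - f x0 = ∫ x, (f x - f x0) ∂μ := by
    rw [integral_sub hfμ (integrable_const _), integral_const]; simp
  have e2 : (∫ x, f x ∂ν) - f x0 = ∫ x, (f x - f x0) ∂ν := by
    rw [integral_sub hfν (integrable_const _), integral_const]; simp
  have b1 : ∫ x, (f x - f x0) ∂μ ≤ ∫ x, ‖x - x0‖ ∂μ :=
    integral_mono (hfμ.sub (integrable_const _)) hμ fun x =>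
      le_trans (le_abs_self _) (hb x)
  have b2 : ∫ x, -(f x - f x0) ∂ν ≤ ∫ x, ‖x - x0‖ ∂ν :=
    integral_mono ((hfν.sub (integrable_const _)).neg) hν fun x =>
      le_trans (neg_le_abs _) (hb x)
  rw [integral_neg] at b2
  linarith

lemma W1_bddAbove {μ ν : Measure (Euc k)} [IsProbabilityMeasure μ] [IsProbabilityMeasure ν]
    (x0 : Euc k)
    (hμ : Integrable (fun x => ‖x - x0‖) μ) (hν : Integrable (fun x => ‖x - x0‖) ν) :
    BddAbove {t : ℝ | ∃ f : Euc k → ℝ, LipschitzWith 1 f ∧ t = (∫ x, f x ∂μ) - ∫ x, f x ∂ν} :=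
  ⟨(∫ x, ‖x - x0‖ ∂μ) + ∫ x, ‖x - x0‖ ∂ν, W1_elt_le x0 hμ hν⟩

lemma diff_le_W1 {μ ν : Measure (Euc k)} [IsProbabilityMeasure μ] [IsProbabilityMeasure ν]
    (x0 : Euc k)
    (hμ : Integrable (fun x => ‖x - x0‖) μ) (hν : Integrable (fun x => ‖x - x0‖) ν)
    {f : Euc k → ℝ} (hf : LipschitzWith 1 f) :
    (∫ x, f x ∂μ) - ∫ x, f x ∂ν ≤ W1 μ ν :=
  le_csSup (W1_bddAbove x0 hμ hν) ⟨f, hf, rfl⟩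

lemma W1_le {μ ν : Measure (Euc k)} [IsProbabilityMeasure μ] [IsProbabilityMeasure ν]
    (x0 : Euc k)
    (hμ : Integrable (fun x => ‖x - x0‖) μ) (hν : Integrable (fun x => ‖x - x0‖) ν) :
    W1 μ ν ≤ (∫ x, ‖x - x0‖ ∂μ) + ∫ x, ‖x - x0‖ ∂ν :=
  csSup_le (W1_set_nonempty μ ν) (W1_elt_le x0 hμ hν)

lemma W1_symm (μ ν : Measure (Euc k)) : W1 μ ν = W1 ν μ := by
  unfold W1
  congr 1
  ext t
  constructor
  · rintro ⟨f, hf, rfl⟩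
    exact ⟨fun x => -f x, hf.neg, by simp [integral_neg]; ring⟩
  · rintro ⟨f, hf, rfl⟩
    exact ⟨fun x => -f x, hf.neg, by simp [integral_neg]; ring⟩

lemma W1_triangle {μ ν ρ : Measure (Euc k)}
    [IsProbabilityMeasure μ] [IsProbabilityMeasure ν] [IsProbabilityMeasure ρ]
    (hμ : Integrable (fun x => ‖x‖) μ) (hν : Integrable (fun x => ‖x‖) ν)
    (hρ : Integrable (fun x => ‖x‖) ρ) :
    W1 μ ρ ≤ W1 μ ν + W1 ν ρ := by
  have hμ' : Integrable (fun x : Euc k => ‖x - 0‖) μ := by simpa using hμ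
  have hν' : Integrable (fun x : Euc k => ‖x - 0‖) ν := by simpa using hν
  have hρ' : Integrable (fun x : Euc k => ‖x - 0‖) ρ := by simpa using hρ
  refine csSup_le (W1_set_nonempty μ ρ) ?_
  rintro t ⟨f, hf, rfl⟩
  have h1 := diff_le_W1 (0 : Euc k) hμ' hν' hf
  have h2 := diff_le_W1 (0 : Euc k) hν' hρ' hf
  linarith


variable {r d : ℕ}

lemma lip_of_bound {L : ℝ} (hL : 0 ≤ L) {g : Euc r → Euc d}
    (hg : ∀ x y, ‖g x - g y‖ ≤ L * ‖x - y‖) : LipschitzWith L.toNNReal g :=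
  LipschitzWith.of_dist_le_mul fun x y => by
    simpa [dist_eq_norm, Real.coe_toNNReal L hL] using hg x y

lemma integral_map_eq {L : ℝ} (hL : 0 ≤ L) {g : Euc r → Euc d}
    (hg : ∀ x y, ‖g x - g y‖ ≤ L * ‖x - y‖) (μ : Measure (Euc r))
    {f : Euc d → ℝ} (hf : Continuous f) :
    ∫ x, f x ∂(Measure.map g μ) = ∫ z, f (g z) ∂μ :=
  integral_map (lip_of_bound hL hg).continuous.measurable.aemeasurable
    hf.aestronglyMeasurable

lemma integrable_comp_center {L : ℝ} (hL : 0 ≤ L) {g : Euc r → Euc d}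
    (hg : ∀ x y, ‖g x - g y‖ ≤ L * ‖x - y‖) (μ : Measure (Euc r))
    [IsProbabilityMeasure μ] (hμ : Integrable (fun z => ‖z‖) μ) :
    Integrable (fun z => ‖g z - g 0‖) μ := by
  have hgc := (lip_of_bound hL hg).continuous
  refine Integrable.mono' (hμ.const_mul L)
    ((hgc.sub continuous_const).norm.aestronglyMeasurable) ?_
  filter_upwards with z
  have h1 : ‖g z - g 0‖ ≤ L * ‖z - 0‖ := hg z 0
  rw [sub_zero] at h1
  simpa [norm_norm] using h1

lemma map_moment {L : ℝ} (hL : 0 ≤ L) {g : Euc r → Euc d}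
    (hg : ∀ x y, ‖g x - g y‖ ≤ L * ‖x - y‖) (μ : Measure (Euc r))
    [IsProbabilityMeasure μ] (hμ : Integrable (fun z => ‖z‖) μ) :
    Integrable (fun x => ‖x‖) (Measure.map g μ) := by
  have hgc := (lip_of_bound hL hg).continuous
  rw [integrable_map_measure continuous_norm.aestronglyMeasurable
    hgc.measurable.aemeasurable]
  refine Integrable.mono' ((integrable_const ‖g 0‖).add (hμ.const_mul L))
    (hgc.norm.aestronglyMeasurable) ?_
  filter_upwards with z
  have h1 : ‖g z - g 0‖ ≤ L * ‖z - 0‖ := hg z 0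
  rw [sub_zero] at h1
  have h2 : ‖g z‖ ≤ ‖g 0‖ + ‖g z - g 0‖ := by
    have := norm_sub_norm_le (g z) (g 0); linarith [norm_nonneg (g z - g 0)]
  simpa [Function.comp, norm_norm] using le_trans h2 (by linarith)

lemma map_moment_center {L : ℝ} (hL : 0 ≤ L) {g : Euc r → Euc d}
    (hg : ∀ x y, ‖g x - g y‖ ≤ L * ‖x - y‖) (μ : Measure (Euc r))
    [IsProbabilityMeasure μ] (hμ : Integrable (fun z => ‖z‖) μ) :
    Integrable (fun x => ‖x - g 0‖) (Measure.map g μ) := by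
  have hgc := (lip_of_bound hL hg).continuous
  have hc : Continuous (fun x : Euc d => ‖x - g 0‖) := by fun_prop
  rw [integrable_map_measure hc.aestronglyMeasurable hgc.measurable.aemeasurable]
  exact integrable_comp_center hL hg μ hμ

lemma map_center_integral_le {L : ℝ} (hL : 0 ≤ L) {g : Euc r → Euc d}
    (hg : ∀ x y, ‖g x - g y‖ ≤ L * ‖x - y‖) (μ : Measure (Euc r))
    [IsProbabilityMeasure μ] (hμ : Integrable (fun z => ‖z‖) μ) :
    ∫ x, ‖x - g 0‖ ∂(Measure.map g μ) ≤ L * ∫ z, ‖z‖ ∂μ := by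
  have hgc := (lip_of_bound hL hg).continuous
  have hc : Continuous (fun x : Euc d => ‖x - g 0‖) := by fun_prop
  rw [integral_map hgc.measurable.aemeasurable hc.aestronglyMeasurable]
  calc ∫ z, ‖g z - g 0‖ ∂μ ≤ ∫ z, L * ‖z‖ ∂μ := by
        refine integral_mono (integrable_comp_center hL hg μ hμ) (hμ.const_mul L)
          fun z => ?_
        have h1 := hg z 0; rw [sub_zero] at h1; exact h1
    _ = L * ∫ z, ‖z‖ ∂μ := integral_const_mul L _


end W1aux

open W1aux

/-- **Pathwise oracle inequality for WGAN with parametric discriminators**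
(the inequality underlying Theorem 3 of the paper). -/
theorem wgan_oracle_inequality_parametric
    (r d : ℕ) (hr : 1 ≤ r) (hd : 1 ≤ d) (L : ℝ) (hL : 0 ≤ L)
    (π πh : Measure (Euc r)) (ν νh : Measure (Euc d))
    [IsProbabilityMeasure π] [IsProbabilityMeasure πh]
    [IsProbabilityMeasure ν] [IsProbabilityMeasure νh]
    (hπ1 : Integrable (fun z : Euc r => ‖z‖) π)
    (hπh1 : Integrable (fun z : Euc r => ‖z‖) πh)
    (hν1 : Integrable (fun x : Euc d => ‖x‖) ν)
    (hνh1 : Integrable (fun x : Euc d => ‖x‖) νh)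
    (G : Set (Euc r → Euc d)) (hGne : G.Nonempty)
    (hGLip : ∀ g ∈ G, ∀ x y : Euc r, ‖g x - g y‖ ≤ L * ‖x - y‖)
    (F : Set (Euc d → ℝ)) (hFne : F.Nonempty)
    (hFLip : ∀ f ∈ F, LipschitzWith 1 f)
    (hFsymm : ∀ f ∈ F, (fun x => -f x) ∈ F)
    (gh : Euc r → Euc d) (hghG : gh ∈ G)
    (hmin : ∀ g ∈ G,
      sSup {t : ℝ | ∃ f ∈ F, t = (∫ z, f (gh z) ∂πh) - ∫ x, f x ∂νh} ≤
      sSup {t : ℝ | ∃ f ∈ F, t = (∫ z, f (g z) ∂πh) - ∫ x, f x ∂νh}) :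
    W1 (Measure.map gh π) ν ≤
      sInf {t : ℝ | ∃ g ∈ G, t = W1 (Measure.map g π) ν} +
      2 * sSup {t : ℝ | ∃ g ∈ G, t = W1 (Measure.map g π) (Measure.map g πh)} +
      2 * W1 ν νh +
      sSup {t : ℝ | ∃ f : Euc d → ℝ, LipschitzWith 1 f ∧
        t = sInf {u : ℝ | ∃ ft ∈ F,
          u = (∫ z, (f (gh z) - ft (gh z)) ∂π) + ∫ x, (ft x - f x) ∂ν}} := by
  classical
  obtain ⟨ft0, hft0⟩ := hFne
  -- probability instances and moments for mapped measures
  have probmap : ∀ g ∈ G, ∀ (μ : Measure (Euc r)), IsProbabilityMeasure μ →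
      IsProbabilityMeasure (Measure.map g μ) := fun g hg μ hμ => by
    haveI := hμ
    exact Measure.isProbabilityMeasure_map
      (lip_of_bound hL (hGLip g hg)).continuous.measurable.aemeasurable
  haveI hPghπ : IsProbabilityMeasure (Measure.map gh π) := probmap gh hghG π inferInstance
  haveI hPghπh : IsProbabilityMeasure (Measure.map gh πh) := probmap gh hghG πh inferInstance
  have hν0 : Integrable (fun x : Euc d => ‖x - 0‖) ν := by simpa using hν1
  have hνh0 : Integrable (fun x : Euc d => ‖x - 0‖) νh := by simpa using hνh1
  have hMghπ : Integrable (fun x : Euc d => ‖x‖) (Measure.map gh π) :=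
    map_moment hL (hGLip gh hghG) π hπ1
  have hMghπ0 : Integrable (fun x : Euc d => ‖x - 0‖) (Measure.map gh π) := by
    simpa using hMghπ
  have hMghπh : Integrable (fun x : Euc d => ‖x‖) (Measure.map gh πh) :=
    map_moment hL (hGLip gh hghG) πh hπh1
  have hMghπh0 : Integrable (fun x : Euc d => ‖x - 0‖) (Measure.map gh πh) := by
    simpa using hMghπh
  -- the u-equality
  have u_eq : ∀ (f : Euc d → ℝ), LipschitzWith 1 f → ∀ ft ∈ F,
      (∫ z, (f (gh z) - ft (gh z)) ∂π) + ∫ x, (ft x - f x) ∂ν =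
      ((∫ x, f x ∂(Measure.map gh π)) - ∫ x, f x ∂ν) -
      ((∫ x, ft x ∂(Measure.map gh π)) - ∫ x, ft x ∂ν) := by
    intro f hf ft hft
    have hftl := hFLip ft hft
    have e1 : ∫ z, (f (gh z) - ft (gh z)) ∂π =
        (∫ x, f x ∂(Measure.map gh π)) - ∫ x, ft x ∂(Measure.map gh π) := by
      rw [← integral_sub (integrable_of_lip 0 hMghπ0 hf)
        (integrable_of_lip 0 hMghπ0 hftl)]
      exact (integral_map_eq hL (hGLip gh hghG) π
        (hf.continuous.sub hftl.continuous)).symm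
    have e2 : ∫ x, (ft x - f x) ∂ν = (∫ x, ft x ∂ν) - ∫ x, f x ∂ν :=
      integral_sub (integrable_of_lip 0 hν0 hftl) (integrable_of_lip 0 hν0 hf)
    rw [e1, e2]; ring
  -- bound for the F-distance terms
  have ft_diff_le : ∀ ft ∈ F,
      (∫ x, ft x ∂(Measure.map gh π)) - ∫ x, ft x ∂ν ≤ W1 (Measure.map gh π) ν :=
    fun ft hft => diff_le_W1 0 hMghπ0 hν0 (hFLip ft hft)
  -- U-sets are bounded below
  have U_bddBelow : ∀ (f : Euc d → ℝ), LipschitzWith 1 f →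
      BddBelow {u : ℝ | ∃ ft ∈ F,
        u = (∫ z, (f (gh z) - ft (gh z)) ∂π) + ∫ x, (ft x - f x) ∂ν} := by
    intro f hf
    refine ⟨((∫ x, f x ∂(Measure.map gh π)) - ∫ x, f x ∂ν) -
      W1 (Measure.map gh π) ν, ?_⟩
    rintro u ⟨ft, hft, rfl⟩
    rw [u_eq f hf ft hft]
    linarith [ft_diff_le ft hft]
  -- approximation set bounded above
  have A_elt_le : ∀ t ∈ {t : ℝ | ∃ f : Euc d → ℝ, LipschitzWith 1 f ∧
      t = sInf {u : ℝ | ∃ ft ∈ F,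
        u = (∫ z, (f (gh z) - ft (gh z)) ∂π) + ∫ x, (ft x - f x) ∂ν}},
      t ≤ W1 (Measure.map gh π) ν -
        ((∫ x, ft0 x ∂(Measure.map gh π)) - ∫ x, ft0 x ∂ν) := by
    rintro t ⟨f, hf, rfl⟩
    have h1 : sInf {u : ℝ | ∃ ft ∈ F,
        u = (∫ z, (f (gh z) - ft (gh z)) ∂π) + ∫ x, (ft x - f x) ∂ν} ≤
        (∫ z, (f (gh z) - ft0 (gh z)) ∂π) + ∫ x, (ft0 x - f x) ∂ν :=
      csInf_le (U_bddBelow f hf) ⟨ft0, hft0, rfl⟩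
    rw [u_eq f hf ft0 hft0] at h1
    have h2 := diff_le_W1 0 hMghπ0 hν0 hf
    linarith
  have A_bddAbove : BddAbove {t : ℝ | ∃ f : Euc d → ℝ, LipschitzWith 1 f ∧
      t = sInf {u : ℝ | ∃ ft ∈ F,
        u = (∫ z, (f (gh z) - ft (gh z)) ∂π) + ∫ x, (ft x - f x) ∂ν}} :=
    ⟨_, A_elt_le⟩
  -- the generator sup set is bounded above
  have Sg_elt_le : ∀ t ∈ {t : ℝ | ∃ g ∈ G,
      t = W1 (Measure.map g π) (Measure.map g πh)},
      t ≤ L * (∫ z, ‖z‖ ∂π) + L * ∫ z, ‖z‖ ∂πh := by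
    rintro t ⟨g, hg, rfl⟩
    haveI := probmap g hg π inferInstance
    haveI := probmap g hg πh inferInstance
    have h := W1_le (g 0) (map_moment_center hL (hGLip g hg) π hπ1)
      (map_moment_center hL (hGLip g hg) πh hπh1)
    have h1 := map_center_integral_le hL (hGLip g hg) π hπ1
    have h2 := map_center_integral_le hL (hGLip g hg) πh hπh1
    linarith
  have Sg_bddAbove : BddAbove {t : ℝ | ∃ g ∈ G,
      t = W1 (Measure.map g π) (Measure.map g πh)} := ⟨_, Sg_elt_le⟩
  -- discriminator-sup sets
  have Sd_elt_le : ∀ g ∈ G, ∀ t ∈ {t : ℝ | ∃ f ∈ F,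
      t = (∫ z, f (g z) ∂πh) - ∫ x, f x ∂νh},
      t ≤ W1 (Measure.map g πh) νh := by
    intro g hg
    haveI := probmap g hg πh inferInstance
    have hM0 : Integrable (fun x : Euc d => ‖x - 0‖) (Measure.map g πh) := by
      simpa using map_moment hL (hGLip g hg) πh hπh1
    rintro t ⟨f, hfF, rfl⟩
    rw [← integral_map_eq hL (hGLip g hg) πh (hFLip f hfF).continuous]
    exact diff_le_W1 0 hM0 hνh0 (hFLip f hfF)
  have Sd_le : ∀ g ∈ G, sSup {t : ℝ | ∃ f ∈ F,
      t = (∫ z, f (g z) ∂πh) - ∫ x, f x ∂νh} ≤ W1 (Measure.map g πh) νh :=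
    fun g hg => csSup_le ⟨_, ft0, hft0, rfl⟩ (Sd_elt_le g hg)
  -- the key estimate
  have key : ∀ g ∈ G, W1 (Measure.map gh π) ν ≤
      W1 (Measure.map g π) ν +
      2 * sSup {t : ℝ | ∃ g ∈ G, t = W1 (Measure.map g π) (Measure.map g πh)} +
      2 * W1 ν νh +
      sSup {t : ℝ | ∃ f : Euc d → ℝ, LipschitzWith 1 f ∧
        t = sInf {u : ℝ | ∃ ft ∈ F,
          u = (∫ z, (f (gh z) - ft (gh z)) ∂π) + ∫ x, (ft x - f x) ∂ν}} := by
    intro g hg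
    haveI := probmap g hg π inferInstance
    haveI := probmap g hg πh inferInstance
    have hMgπ : Integrable (fun x : Euc d => ‖x‖) (Measure.map g π) :=
      map_moment hL (hGLip g hg) π hπ1
    have hMgπh : Integrable (fun x : Euc d => ‖x‖) (Measure.map g πh) :=
      map_moment hL (hGLip g hg) πh hπh1
    refine csSup_le (W1_set_nonempty _ _) ?_
    rintro t ⟨f, hf, rfl⟩
    -- for every ft ∈ F we get a bound
    have chain : ∀ ft ∈ F,
        (∫ x, f x ∂(Measure.map gh π)) - ∫ x, f x ∂ν ≤
        ((∫ z, (f (gh z) - ft (gh z)) ∂π) + ∫ x, (ft x - f x) ∂ν) +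
        W1 (Measure.map gh π) (Measure.map gh πh) +
        W1 (Measure.map g π) (Measure.map g πh) +
        W1 (Measure.map g π) ν + 2 * W1 ν νh := by
      intro ft hft
      have hftl := hFLip ft hft
      have T1 : (∫ x, ft x ∂(Measure.map gh π)) - ∫ x, ft x ∂(Measure.map gh πh) ≤
          W1 (Measure.map gh π) (Measure.map gh πh) :=
        diff_le_W1 0 hMghπ0 hMghπh0 hftl
      have T3 : (∫ x, ft x ∂νh) - ∫ x, ft x ∂ν ≤ W1 ν νh := by
        rw [W1_symm ν νh]
        exact diff_le_W1 0 hνh0 hν0 hftl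
      -- T2: the discriminator term
      have T2a : (∫ x, ft x ∂(Measure.map gh πh)) - ∫ x, ft x ∂νh ≤
          sSup {t : ℝ | ∃ f ∈ F, t = (∫ z, f (gh z) ∂πh) - ∫ x, f x ∂νh} := by
        refine le_csSup ⟨W1 (Measure.map gh πh) νh, Sd_elt_le gh hghG⟩ ?_
        exact ⟨ft, hft, by rw [integral_map_eq hL (hGLip gh hghG) πh hftl.continuous]⟩
      have T2b := hmin g hg
      have T2c := Sd_le g hg
      have T2d : W1 (Measure.map g πh) νh ≤
          W1 (Measure.map g πh) (Measure.map g π) + W1 (Measure.map g π) ν +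
          W1 ν νh := by
        have tri1 : W1 (Measure.map g πh) νh ≤
            W1 (Measure.map g πh) (Measure.map g π) + W1 (Measure.map g π) νh :=
          W1_triangle hMgπh hMgπ hνh1
        have tri2 : W1 (Measure.map g π) νh ≤
            W1 (Measure.map g π) ν + W1 ν νh :=
          W1_triangle hMgπ hν1 hνh1
        linarith
      have symm1 : W1 (Measure.map g πh) (Measure.map g π) =
          W1 (Measure.map g π) (Measure.map g πh) := W1_symm _ _
      have ueq := u_eq f hf ft hft
      linarith
    -- pass to the infimum over ft, then bound by the sups
    have hinf : (∫ x, f x ∂(Measure.map gh π)) - ∫ x, f x ∂ν -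
        (W1 (Measure.map gh π) (Measure.map gh πh) +
         W1 (Measure.map g π) (Measure.map g πh) +
         W1 (Measure.map g π) ν + 2 * W1 ν νh) ≤
        sInf {u : ℝ | ∃ ft ∈ F,
          u = (∫ z, (f (gh z) - ft (gh z)) ∂π) + ∫ x, (ft x - f x) ∂ν} := by
      refine le_csInf ⟨_, ft0, hft0, rfl⟩ ?_
      rintro u ⟨ft, hft, rfl⟩
      linarith [chain ft hft]
    have hA : sInf {u : ℝ | ∃ ft ∈ F,
        u = (∫ z, (f (gh z) - ft (gh z)) ∂π) + ∫ x, (ft x - f x) ∂ν} ≤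
        sSup {t : ℝ | ∃ f : Euc d → ℝ, LipschitzWith 1 f ∧
          t = sInf {u : ℝ | ∃ ft ∈ F,
            u = (∫ z, (f (gh z) - ft (gh z)) ∂π) + ∫ x, (ft x - f x) ∂ν}} :=
      le_csSup A_bddAbove ⟨f, hf, rfl⟩
    have hS1 : W1 (Measure.map gh π) (Measure.map gh πh) ≤
        sSup {t : ℝ | ∃ g ∈ G, t = W1 (Measure.map g π) (Measure.map g πh)} :=
      le_csSup Sg_bddAbove ⟨gh, hghG, rfl⟩
    have hS2 : W1 (Measure.map g π) (Measure.map g πh) ≤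
        sSup {t : ℝ | ∃ g ∈ G, t = W1 (Measure.map g π) (Measure.map g πh)} :=
      le_csSup Sg_bddAbove ⟨g, hg, rfl⟩
    linarith
  -- conclude via the infimum over g
  obtain ⟨g0, hg0⟩ := hGne
  have hinfG : W1 (Measure.map gh π) ν -
      (2 * sSup {t : ℝ | ∃ g ∈ G, t = W1 (Measure.map g π) (Measure.map g πh)} +
       2 * W1 ν νh +
       sSup {t : ℝ | ∃ f : Euc d → ℝ, LipschitzWith 1 f ∧
         t = sInf {u : ℝ | ∃ ft ∈ F,
           u = (∫ z, (f (gh z) - ft (gh z)) ∂π) + ∫ x, (ft x - f x) ∂ν}}) ≤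
      sInf {t : ℝ | ∃ g ∈ G, t = W1 (Measure.map g π) ν} := by
    refine le_csInf ⟨_, g0, hg0, rfl⟩ ?_
    rintro t ⟨g, hg, rfl⟩
    linarith [key g hg]
  linarith

end
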